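/- Let H be a torsion-free subgroup of a discrete group G such that for every nonzero θ ∈ ℂ[H] and nonzero k ∈ ℓ²(H) one has θ * k ≠ 0 (i.e. H satisfies the ℓ²-zero-divisor property). Then every nonzero f ∈ ℓ²(G) has linearly independent left H-translations. -/

import Mathlib

/-!
If `∑ₕ l(h) f(h⁻¹x) = 0` for all `x ∈ G`, then for `x₀` with `f x₀ ≠ 0` the restriction
`k(h) = f(h x₀)` of `f` to the coset `H x₀` is a nonzero element of `ℓ²(H)` annihilated by the
nonzero element `∑ₕ l(h) h` of `ℂ[H]`, contradicting the `ℓ²`-zero-divisor property of `H`.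
-/

variable {G : Type*} [Group G]

/-- Left convolution action of the group ring `ℂ[H]` of a subgroup `H ≤ G` on
complex-valued functions on `G`. -/
noncomputable def subConvG {H : Subgroup G} (θ : MonoidAlgebra ℂ H) (f : G → ℂ) :
    G → ℂ :=
  fun x => ∑ h ∈ θ.coeff.support, θ.coeff h * f ((h : G)⁻¹ * x)

/-- Left convolution action of `ℂ[H]` on complex-valued functions on `H`. -/
noncomputable def subConvH {H : Subgroup G} (θ : MonoidAlgebra ℂ H) (k : H → ℂ) :
    H → ℂ :=
  fun x => ∑ h ∈ θ.coeff.support, θ.coeff h * k (h⁻¹ * x)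

open Finsupp

theorem Memℓp.comp_injective {α β E : Type*} [NormedAddCommGroup E] {p : ENNReal}
    {f : α → E} (hf : Memℓp f p) {e : β → α} (he : Function.Injective e) :
    Memℓp (f ∘ e) p := by
  rcases p.trichotomy with rfl | rfl | hp
  · exact memℓp_zero (hf.finite_dsupport.preimage he.injOn)
  · exact memℓp_infty (hf.bddAbove.mono (Set.range_comp_subset_range e (‖f ·‖)))
  · exact memℓp_gen ((hf.summable hp).comp_injective he)

namespace lp

variable {E : Type*} [NormedAddCommGroup E] {p : ENNReal}

def restrictCoset (H : Subgroup G) (f : lp (fun _ : G => E) p) (x : G) :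
    lp (fun _ : H => E) p :=
  ⟨fun h => f (h * x), (lp.memℓp f).comp_injective fun _ _ h => Subtype.ext (mul_right_cancel h)⟩

@[simp]
theorem coe_restrictCoset (H : Subgroup G) (f : lp (fun _ : G => E) p) (x : G) :
    ⇑(restrictCoset H f x) = fun h : H => f (h * x) :=
  rfl

theorem restrictCoset_ne_zero {H : Subgroup G} {f : lp (fun _ : G => E) p} {x : G}
    (hx : f x ≠ 0) : restrictCoset H f x ≠ 0 := fun h0 =>
  hx (by simpa using congrArg (fun k : lp (fun _ : H => E) p => k 1) h0)

end lp

theorem subConvH_comp_mul_right {H : Subgroup G} (θ : MonoidAlgebra ℂ H) (f : G → ℂ) (x : G)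
    (h : H) : subConvH θ (fun h' : H => f (h' * x)) h = subConvG θ f (h * x) := by
  simp only [subConvH, subConvG, Subgroup.coe_mul, Subgroup.coe_inv, mul_assoc]

theorem linearCombination_translations_eq_subConvG {H : Subgroup G} (f : G → ℂ) (l : H →₀ ℂ) :
    linearCombination ℂ (fun h : H => fun x : G => f ((h : G)⁻¹ * x)) l =
      subConvG (MonoidAlgebra.ofCoeff l) f := by
  ext x
  simp [linearCombination_apply, Finsupp.sum, Finset.sum_apply, subConvG]

theorem translations_linearIndependent_of_atiyah_general (H : Subgroup G)
    (hAtiyah : ∀ θ : MonoidAlgebra ℂ H, θ ≠ 0 →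
      ∀ k : lp (fun _ : H => ℂ) 2, k ≠ 0 → subConvH θ (⇑k) ≠ 0)
    (f : lp (fun _ : G => ℂ) 2) (hf : f ≠ 0) :
    LinearIndependent ℂ (fun h : H => fun x : G => f ((h : G)⁻¹ * x)) := by
  rw [linearIndependent_iff]
  intro l hl
  by_contra hl0
  obtain ⟨x, hx⟩ : ∃ x, f x ≠ 0 := by
    contrapose! hf
    exact lp.ext (funext hf)
  refine hAtiyah (MonoidAlgebra.ofCoeff l) (by simpa using hl0) _ (lp.restrictCoset_ne_zero hx)
    (funext fun h => ?_)
  rw [lp.coe_restrictCoset, subConvH_comp_mul_right,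
    ← linearCombination_translations_eq_subConvG, hl]
  rfl

/-- Let `H` be a torsion-free subgroup of a discrete group `G`
satisfying the `ℓ²`-zero-divisor property (for every nonzero `θ ∈ ℂ[H]` and
nonzero `k ∈ ℓ²(H)`, `θ * k ≠ 0`).  Then every nonzero `f ∈ ℓ²(G)` has linearly
independent left `H`-translations `x ↦ f(h⁻¹ x)`, `h ∈ H`. -/
theorem translations_linearIndependent_of_atiyah (H : Subgroup G)
    (htf : ∀ g : H, g ≠ 1 → ¬IsOfFinOrder g)
    (hAtiyah : ∀ θ : MonoidAlgebra ℂ H, θ ≠ 0 →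
      ∀ k : lp (fun _ : H => ℂ) 2, k ≠ 0 → subConvH θ (⇑k) ≠ 0)
    (f : lp (fun _ : G => ℂ) 2) (hf : f ≠ 0) :
    LinearIndependent ℂ (fun h : H => fun x : G => f ((h : G)⁻¹ * x)) :=
  translations_linearIndependent_of_atiyah_general H hAtiyah f hf
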